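/- (Broadbent–Hammersley lower bound for the critical probability) In bond percolation on ℤ^d (d ≥ 2) with parameter p, if p < 1/κ, where κ is the connective constant of ℤ^d, then the open cluster C of the origin is almost surely finite; in particular the critical probability satisfies p_c ≥ 1/κ. -/

import Mathlib

/-!
If the open cluster of the origin is infinite, it reaches outside every ball, so for each `n` it
contains an open self-avoiding walk of length `n` from the origin. Such a walk uses `n` distinct
edges and is therefore open with probability `p ^ n`; a union bound gives
`P (|C| = ∞) ≤ s_n p ^ n`. Splitting a walk into two shows `s_(m+n) ≤ s_m s_n`, so
`s_(kn) ≤ s_n ^ k`, and `p < 1 / κ` provides an `n` with `s_n p ^ n < 1`; letting `k → ∞`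
gives `P (|C| = ∞) = 0`.
-/

open MeasureTheory ProbabilityTheory Filter

/-- The number of self-avoiding walks of length `n` on the lattice `ℤ^d`,
starting at the origin. -/
noncomputable def sawCount (d n : ℕ) : ℕ :=
  Nat.card {ω : Fin (n + 1) → (Fin d → ℤ) //
    Function.Injective ω ∧ ω 0 = 0 ∧
    ∀ i : Fin n, (∑ j, |ω i.succ j - ω i.castSucc j|) = 1}

/-- The connective constant of `ℤ^d`. -/
noncomputable def connConst (d : ℕ) : ℝ :=
  sInf {x : ℝ | ∃ n : ℕ, 1 ≤ n ∧ x = (sawCount d n : ℝ) ^ ((n : ℝ)⁻¹)}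

/-- Edges of the nearest-neighbour lattice `ℤ^d`: the edge `(x, j)` joins `x`
to `x + e_j`. -/
abbrev latticeEdge (d : ℕ) := (Fin d → ℤ) × Fin d

/-- Two vertices are joined by an open edge in the bond configuration `ω`. -/
def openAdj {d : ℕ} (ω : latticeEdge d → Bool) (a b : Fin d → ℤ) : Prop :=
  (∃ j, b = a + Pi.single j 1 ∧ ω (a, j) = true) ∨
  (∃ j, a = b + Pi.single j 1 ∧ ω (b, j) = true)

/-- The open cluster of the origin: all vertices joined to the origin by a path
of open edges. -/
def bondCluster {d : ℕ} (ω : latticeEdge d → Bool) : Set (Fin d → ℤ) :=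
  {y | Relation.ReflTransGen (openAdj ω) 0 y}

open Function Metric
open scoped ENNReal

section Lattice

variable {d : ℕ}

def edgeEnds (e : latticeEdge d) : Sym2 (Fin d → ℤ) := s(e.1, e.1 + Pi.single e.2 1)

lemma edgeEnds_injective : Injective (edgeEnds (d := d)) := by
  rintro ⟨x, j⟩ ⟨y, k⟩ h
  rcases Sym2.eq_iff.1 h with ⟨rfl, hxy⟩ | ⟨rfl, hxy⟩
  · have := congrFun (add_left_cancel hxy) j
    by_cases hjk : j = k
    · rw [hjk]
    · simp [hjk] at this
  · have := congrFun hxy j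
    simp only [Pi.add_apply, Pi.single_eq_same, Pi.single_apply] at this
    split_ifs at this <;> omega

lemma sum_abs_eq_one_iff (x : Fin d → ℤ) :
    ∑ j, |x j| = 1 ↔ ∃ j, x = Pi.single j 1 ∨ x = -Pi.single j 1 := by
  constructor
  · intro h
    obtain ⟨j, hj⟩ : ∃ j, x j ≠ 0 := by
      by_contra! h0
      simp [h0] at h
    have hsplit := Finset.add_sum_erase _ (fun k => |x k|) (Finset.mem_univ j)
    have hrest := Finset.sum_nonneg fun k (_ : k ∈ Finset.univ.erase j) => abs_nonneg (x k)
    have hxj : |x j| = 1 := by have := abs_pos.2 hj; omega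
    have hzero : ∀ k ≠ j, x k = 0 := fun k hk => abs_eq_zero.1 <|
      (Finset.sum_eq_zero_iff_of_nonneg fun k _ => abs_nonneg (x k)).1 (by omega) k
        (Finset.mem_erase.2 ⟨hk, Finset.mem_univ k⟩)
    refine ⟨j, ?_⟩
    rcases abs_eq zero_le_one |>.1 hxj with h1 | h1 <;> [left; right] <;> ext k <;>
      by_cases hk : k = j <;> simp [hk, h1, hzero]
  · rintro ⟨j, rfl | rfl⟩ <;> simp [Pi.single_apply, apply_ite (abs : ℤ → ℤ)]

lemma exists_edgeEnds_eq_iff {a b : Fin d → ℤ} :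
    (∃ e, edgeEnds e = s(a, b)) ↔ ∑ j, |b j - a j| = 1 := by
  rw [show ∑ j, |b j - a j| = ∑ j, |(b - a) j| from rfl, sum_abs_eq_one_iff]
  constructor
  · rintro ⟨⟨x, j⟩, h⟩
    rcases Sym2.eq_iff.1 h with ⟨rfl, rfl⟩ | ⟨rfl, rfl⟩
    · exact ⟨j, Or.inl (add_sub_cancel_left _ _)⟩
    · exact ⟨j, Or.inr (sub_add_cancel_left _ _)⟩
  · rintro ⟨j, h | h⟩
    · exact ⟨(a, j), by rw [edgeEnds, ← h, add_sub_cancel]⟩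
    · have hba : b + Pi.single j 1 = a := by rw [← neg_neg (Pi.single j 1), ← h]; abel
      exact ⟨(b, j), by rw [edgeEnds, hba, Sym2.eq_swap]⟩

lemma openAdj_iff {ω : latticeEdge d → Bool} {a b : Fin d → ℤ} :
    openAdj ω a b ↔ ∃ e, ω e = true ∧ edgeEnds e = s(a, b) := by
  constructor
  · rintro (⟨j, rfl, hω⟩ | ⟨j, rfl, hω⟩)
    · exact ⟨(a, j), hω, rfl⟩
    · exact ⟨(b, j), hω, Sym2.eq_swap⟩
  · rintro ⟨⟨x, j⟩, hω, h⟩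
    rcases Sym2.eq_iff.1 h with ⟨rfl, rfl⟩ | ⟨rfl, rfl⟩
    · exact Or.inl ⟨j, rfl, hω⟩
    · exact Or.inr ⟨j, rfl, hω⟩

lemma sum_abs_sub_eq_one_of_openAdj {ω : latticeEdge d → Bool} {a b : Fin d → ℤ}
    (h : openAdj ω a b) : ∑ j, |b j - a j| = 1 :=
  let ⟨e, _, he⟩ := openAdj_iff.1 h
  exists_edgeEnds_eq_iff.1 ⟨e, he⟩

lemma dist_le_one_of_sum_abs_sub_eq_one {a b : Fin d → ℤ} (h : ∑ j, |b j - a j| = 1) :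
    dist a b ≤ 1 := by
  rw [dist_eq_norm']
  refine (pi_norm_le_iff_of_nonneg zero_le_one).2 fun j => ?_
  rw [Pi.sub_apply, Int.norm_eq_abs]
  exact_mod_cast h ▸ Finset.single_le_sum (fun k _ => abs_nonneg (b k - a k)) (Finset.mem_univ j)

end Lattice

section Graph

variable {V : Type*} [PseudoMetricSpace V] {G : SimpleGraph V}

-- `Dist.dist`, since a bare `dist` would resolve to `SimpleGraph.dist` in these declarations.
lemma SimpleGraph.Walk.dist_le_length (hG : ∀ a b, G.Adj a b → Dist.dist a b ≤ 1) {u v : V}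
    (p : G.Walk u v) : Dist.dist u v ≤ p.length := by
  induction p with
  | nil => simp
  | @cons a b c h p ih =>
    calc Dist.dist a c ≤ Dist.dist a b + Dist.dist b c := dist_triangle a b c
      _ ≤ 1 + p.length := add_le_add (hG a b h) ih
      _ = (cons h p).length := by rw [SimpleGraph.Walk.length_cons]; push_cast; ring

lemma SimpleGraph.exists_injective_walk_of_infinite
    (hG : ∀ a b, G.Adj a b → Dist.dist a b ≤ 1) {u : V} {n : ℕ}
    (hball : (closedBall u n).Finite) (hinf : {v | G.Reachable u v}.Infinite) :
    ∃ w : Fin (n + 1) → V, Injective w ∧ w 0 = u ∧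
      ∀ i : Fin n, G.Adj (w i.castSucc) (w i.succ) := by
  classical
  obtain ⟨v, ⟨p⟩, hv⟩ := (hinf.sdiff hball).nonempty
  let q := p.toPath
  have hlen : n < q.1.length := by
    have := q.1.dist_le_length hG
    rw [mem_closedBall, not_le, _root_.dist_comm] at hv
    exact_mod_cast hv.trans_le this
  refine ⟨fun i => q.1.getVert i, fun i j h => Fin.ext ?_, q.1.getVert_zero, fun i => ?_⟩
  · exact q.2.getVert_injOn (by simp; omega) (by simp; omega) h
  · simpa using q.1.adj_getVert_succ (i := i) (by omega)

end Graph

section Cluster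

variable {d : ℕ}

def percGraph (ω : latticeEdge d → Bool) : SimpleGraph (Fin d → ℤ) where
  Adj := openAdj ω
  symm := ⟨fun _ _ => Or.symm⟩
  loopless := ⟨fun _ h => by simpa using sum_abs_sub_eq_one_of_openAdj h⟩

lemma bondCluster_eq_reachable (ω : latticeEdge d → Bool) :
    bondCluster ω = {v | (percGraph ω).Reachable 0 v} :=
  Set.ext fun _ => (SimpleGraph.reachable_iff_reflTransGen (G := percGraph ω) _ _).symm

end Cluster

abbrev SAW (d n : ℕ) := {w : Fin (n + 1) → (Fin d → ℤ) //
    Injective w ∧ w 0 = 0 ∧ ∀ i : Fin n, (∑ j, |w i.succ j - w i.castSucc j|) = 1}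

lemma sawCount_eq_natCard (d n : ℕ) : sawCount d n = Nat.card (SAW d n) := rfl

namespace SAW

variable {d m n : ℕ}

lemma norm_le (w : SAW d n) (i : Fin (n + 1)) : ‖w.1 i‖ ≤ i := by
  induction i using Fin.induction with
  | zero => simp [w.2.2.1]
  | succ i ih =>
    have hstep : ‖w.1 i.succ - w.1 i.castSucc‖ ≤ 1 := by
      rw [← dist_eq_norm]
      exact dist_comm (w.1 i.succ) _ ▸ dist_le_one_of_sum_abs_sub_eq_one (w.2.2.2 i)
    calc ‖w.1 i.succ‖ ≤ ‖w.1 i.succ - w.1 i.castSucc‖ + ‖w.1 i.castSucc‖ :=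
          norm_le_norm_sub_add _ _
      _ ≤ 1 + i := add_le_add hstep (by simpa using ih)
      _ = (i.succ : ℕ) := by push_cast [Fin.val_succ]; ring

lemma mem_closedBall (w : SAW d n) (i : Fin (n + 1)) :
    w.1 i ∈ closedBall (0 : Fin d → ℤ) n :=
  mem_closedBall_zero_iff.2 ((w.norm_le i).trans (by exact_mod_cast i.is_le))

instance : Finite (SAW d n) :=
  have := (isCompact_closedBall (0 : Fin d → ℤ) n).finite_of_discrete.to_subtype
  Finite.of_injective
    (fun w i => (⟨w.1 i, w.mem_closedBall i⟩ : closedBall (0 : Fin d → ℤ) n))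
    fun _ _ h => Subtype.ext <| funext fun i => congrArg Subtype.val (congrFun h i)

def take (w : SAW d (m + n)) : SAW d m :=
  ⟨fun i => w.1 ⟨i, by omega⟩, fun i k h => Fin.ext (by simpa using w.2.1 h),
    (congrArg w.1 (Fin.ext rfl)).trans w.2.2.1, fun i => w.2.2.2 ⟨i, by omega⟩⟩

def drop (w : SAW d (m + n)) : SAW d n :=
  ⟨fun i => w.1 ⟨m + i, by omega⟩ - w.1 ⟨m, by omega⟩,
    fun i k h => Fin.ext (by simpa using w.2.1 (sub_left_injective h)), by simp,
    fun i => by simpa [add_assoc] using w.2.2.2 ⟨m + i, by omega⟩⟩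

lemma take_drop_injective : Injective fun w : SAW d (m + n) => (w.take, w.drop) := by
  intro w w' h
  obtain ⟨htake, hdrop⟩ := Prod.mk.inj h
  have hm : w.1 ⟨m, by omega⟩ = w'.1 ⟨m, by omega⟩ :=
    congrFun (congrArg Subtype.val htake) (Fin.last m)
  refine Subtype.ext (funext fun i => ?_)
  rcases le_or_gt (i : ℕ) m with hi | hi
  · exact congrFun (congrArg Subtype.val htake) ⟨i, by omega⟩
  · have := congrFun (congrArg Subtype.val hdrop) ⟨i - m, by omega⟩
    simp only [drop, hm, sub_left_inj] at this
    convert this using 2 <;> ext <;> simp <;> omega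

lemma exists_edgeEnds_eq (w : SAW d n) (i : Fin n) :
    ∃ e, edgeEnds e = s(w.1 i.castSucc, w.1 i.succ) :=
  exists_edgeEnds_eq_iff.2 (w.2.2.2 i)

noncomputable def edge (w : SAW d n) (i : Fin n) : latticeEdge d := (w.exists_edgeEnds_eq i).choose

lemma edgeEnds_edge (w : SAW d n) (i : Fin n) :
    edgeEnds (w.edge i) = s(w.1 i.castSucc, w.1 i.succ) :=
  (w.exists_edgeEnds_eq i).choose_spec

lemma edge_injective (w : SAW d n) : Injective w.edge := by
  refine Injective.of_comp (f := edgeEnds) fun i k h => ?_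
  simp only [comp_apply, edgeEnds_edge] at h
  rcases Sym2.eq_iff.1 h with ⟨h1, -⟩ | ⟨h1, h2⟩
  · exact Fin.castSucc_injective _ (w.2.1 h1)
  · have e1 := congrArg Fin.val (w.2.1 h1)
    have e2 := congrArg Fin.val (w.2.1 h2)
    simp only [Fin.val_castSucc, Fin.val_succ] at e1 e2
    omega

lemma edge_open_of_openAdj {ω : latticeEdge d → Bool} (w : SAW d n) (i : Fin n)
    (h : openAdj ω (w.1 i.castSucc) (w.1 i.succ)) : ω (w.edge i) = true := by
  obtain ⟨e, he, hends⟩ := openAdj_iff.1 h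
  rwa [← edgeEnds_injective (hends.trans (w.edgeEnds_edge i).symm)]

end SAW

lemma sawCount_add_le (d m n : ℕ) : sawCount d (m + n) ≤ sawCount d m * sawCount d n := by
  simp only [sawCount_eq_natCard, ← Nat.card_prod]
  exact Nat.card_le_card_of_injective _ SAW.take_drop_injective

lemma sawCount_zero_le_one (d : ℕ) : sawCount d 0 ≤ 1 :=
  Finite.card_le_one_iff_subsingleton.2 ⟨fun w w' => Subtype.ext <| funext fun i => by
    rw [show i = 0 from Fin.ext (by omega), w.2.2.1, w'.2.2.1]⟩

lemma sawCount_mul_le_pow (d n k : ℕ) : sawCount d (k * n) ≤ sawCount d n ^ k := by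
  induction k with
  | zero => simpa using sawCount_zero_le_one d
  | succ k ih =>
    calc sawCount d ((k + 1) * n) ≤ sawCount d (k * n) * sawCount d n := by
          rw [Nat.succ_mul]; exact sawCount_add_le d _ _
      _ ≤ sawCount d n ^ (k + 1) := by rw [pow_succ]; exact Nat.mul_le_mul_right _ ih

lemma exists_open_saw_of_infinite {d : ℕ} {ω : latticeEdge d → Bool}
    (hinf : (bondCluster ω).Infinite) (n : ℕ) :
    ∃ w : SAW d n, ∀ i : Fin n, openAdj ω (w.1 i.castSucc) (w.1 i.succ) := by
  rw [bondCluster_eq_reachable] at hinf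
  obtain ⟨w, hinj, h0, hadj⟩ := (percGraph ω).exists_injective_walk_of_infinite
    (fun _ _ h => dist_le_one_of_sum_abs_sub_eq_one (sum_abs_sub_eq_one_of_openAdj h))
    (isCompact_closedBall _ _).finite_of_discrete hinf
  exact ⟨⟨w, hinj, h0, fun i => sum_abs_sub_eq_one_of_openAdj (hadj i)⟩, hadj⟩

lemma exists_sawCount_mul_pow_lt_one {d : ℕ} {p : ℝ} (hp0 : 0 ≤ p)
    (hp : p < 1 / connConst d) : ∃ n, (sawCount d n : ℝ) * p ^ n < 1 := by
  rcases hp0.eq_or_lt with rfl | hp0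
  · exact ⟨1, by simp⟩
  have hκ : 0 < connConst d := by
    by_contra! h
    linarith [one_div_nonpos.2 h]
  obtain ⟨_, ⟨n, hn, rfl⟩, hlt⟩ := exists_lt_of_csInf_lt (by exact ⟨_, 1, le_rfl, rfl⟩)
    ((lt_one_div hp0 hκ).1 hp)
  have hn' : (0 : ℝ) < n := by exact_mod_cast hn
  rw [Real.rpow_inv_lt_iff_of_pos (Nat.cast_nonneg _) (by positivity) hn', Real.rpow_natCast,
    div_pow, one_pow, lt_div_iff₀ (by positivity)] at hlt
  exact ⟨n, hlt⟩

lemma ProbabilityTheory.iIndepFun.measure_iInter_eq_pow {Ω ι κ : Type*} [MeasurableSpace Ω]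
    {P : Measure Ω} {X : ι → Ω → Bool} (hX : iIndepFun X P) {q : ℝ≥0∞}
    (hq : ∀ i, P {ω | X i ω = true} = q) [Fintype κ] {f : κ → ι} (hf : Injective f) :
    P (⋂ k, {ω | X (f k) ω = true}) = q ^ Fintype.card κ := by
  change P (⋂ k, X (f k) ⁻¹' {true}) = _
  rw [(hX.precomp hf).meas_iInter fun k => ⟨{true}, trivial, rfl⟩]
  exact (Fintype.prod_congr _ _ fun k => hq (f k)).trans (Finset.prod_const q)

lemma measure_infinite_bondCluster_le {Ω : Type*} [MeasurableSpace Ω] {P : Measure Ω} {d : ℕ}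
    {X : latticeEdge d → Ω → Bool} (hX : iIndepFun X P) {q : ℝ≥0∞}
    (hq : ∀ e, P {ω | X e ω = true} = q) (n : ℕ) :
    P {ω | (bondCluster fun e => X e ω).Infinite} ≤ sawCount d n * q ^ n := by
  have := Fintype.ofFinite (SAW d n)
  calc P {ω | (bondCluster fun e => X e ω).Infinite}
      ≤ P (⋃ w : SAW d n, ⋂ i, {ω | X (w.edge i) ω = true}) := measure_mono fun ω hω => by
        obtain ⟨w, hw⟩ := exists_open_saw_of_infinite hω n
        exact Set.mem_iUnion.2 ⟨w, Set.mem_iInter.2 fun i => w.edge_open_of_openAdj i (hw i)⟩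
    _ ≤ ∑ w : SAW d n, P (⋂ i, {ω | X (w.edge i) ω = true}) := measure_iUnion_fintype_le _ _
    _ = sawCount d n * q ^ n := by
        simp [hX.measure_iInter_eq_pow hq (SAW.edge_injective _), sawCount_eq_natCard,
          Nat.card_eq_fintype_card]

theorem broadbent_hammersley_subcritical_general
    {Ω : Type*} [MeasurableSpace Ω] (P : Measure Ω)
    (d : ℕ) (p : ℝ) (hp0 : 0 ≤ p)
    (X : latticeEdge d → Ω → Bool)
    (hindep : iIndepFun X P)
    (hbernoulli : ∀ e, P {ω | X e ω = true} = ENNReal.ofReal p)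
    (hp : p < 1 / connConst d) :
    P {ω | (bondCluster (fun e => X e ω)).Infinite} = 0 := by
  obtain ⟨n, hn⟩ := exists_sawCount_mul_pow_lt_one hp0 hp
  have hb : (sawCount d n : ℝ≥0∞) * ENNReal.ofReal p ^ n < 1 := by
    rwa [← ENNReal.ofReal_natCast, ← ENNReal.ofReal_pow hp0,
      ← ENNReal.ofReal_mul (by positivity), ENNReal.ofReal_lt_one]
  have hbound (k : ℕ) : P {ω | (bondCluster fun e => X e ω).Infinite} ≤
      ((sawCount d n : ℝ≥0∞) * ENNReal.ofReal p ^ n) ^ k :=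
    calc _ ≤ sawCount d (k * n) * ENNReal.ofReal p ^ (k * n) :=
          measure_infinite_bondCluster_le hindep hbernoulli _
      _ ≤ (sawCount d n : ℝ≥0∞) ^ k * (ENNReal.ofReal p ^ n) ^ k := by
          rw [pow_mul']
          gcongr
          exact_mod_cast sawCount_mul_le_pow d n k
      _ = _ := (mul_pow _ _ _).symm
  exact nonpos_iff_eq_zero.1 <|
    ge_of_tendsto' (ENNReal.tendsto_pow_atTop_nhds_zero_of_lt_one hb) hbound

/-- (Broadbent–Hammersley) In bond percolation on `ℤ^d` (`d ≥ 2`) with parameter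
`p < 1/κ`, where `κ` is the connective constant, the open cluster of the origin is
almost surely finite. -/
theorem broadbent_hammersley_subcritical
    {Ω : Type*} [MeasurableSpace Ω] (P : Measure Ω) [IsProbabilityMeasure P]
    (d : ℕ) (hd : 2 ≤ d) (p : ℝ) (hp0 : 0 ≤ p) (hp1 : p ≤ 1)
    (X : latticeEdge d → Ω → Bool)
    (hmeas : ∀ e, Measurable (X e))
    (hindep : iIndepFun X P)
    (hbernoulli : ∀ e, P {ω | X e ω = true} = ENNReal.ofReal p)
    (hp : p < 1 / connConst d) :
    P {ω | (bondCluster (fun e => X e ω)).Infinite} = 0 :=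
  broadbent_hammersley_subcritical_general P d p hp0 X hindep hbernoulli hp
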